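/- arXiv:1912.03739 — 3 statements merged into one kernel-verified Lean document; each statement's English description precedes it below -/
import Mathlib

section
/- Property D1 holds for the proof structure of any type of L*(\,!): for the linear order < and reachability relation O* defined on the vertices, if a ≤ b ≤ c, a O* d and c O* d, then b O* d (i.e., the set of vertices below any fixed vertex d forms an interval in the order <). -/
/-- Types of the calculus L*(\,!): primitive types, left division, and the modality `!`. -/
inductive Tp : Type
  | pr : ℕ → Tp
  | div : Tp → Tp → Tp   -- `div A B` is the left division  A \ B
  | bang : Tp → Tp        -- `bang A` is  !A

namespace Tp

/-! ### The proof structure of a type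

Vertices of the tree associated to a type are represented by their paths from the
root `[]`; at a vertex of the form `div A B`, step `0` goes into the subtree of `A`
(arc labelled `-1`) and step `1` goes into the subtree of `B` (arc labelled `1`);
at a vertex of the form `bang A`, step `0` goes into the subtree of `A`
(arc labelled `2`).  Arcs are directed towards the root, so the parent of a vertex
`b ++ [k]` is `b`, and `a O* b` means that `b` is a prefix of `a`. -/

/-- `isVertex T p` : the path `p` is a vertex of the tree of the type `T`. -/
def isVertex : Tp → List ℕ → Prop
  | _, [] => True
  | bang A, 0 :: p => isVertex A p
  | div A _, 0 :: p => isVertex A p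
  | div _ B, 1 :: p => isVertex B p
  | _, _ => False

/-- The subtype of `T` located at the vertex `p` (junk value off vertices). -/
def subAt : Tp → List ℕ → Tp
  | A, [] => A
  | bang A, 0 :: p => subAt A p
  | div A _, 0 :: p => subAt A p
  | div _ B, 1 :: p => subAt B p
  | A, _ => A

/-- `d a`: the number of arcs labelled `-1` on the path from the vertex `a` to the root. -/
def dpth : Tp → List ℕ → ℕ
  | div A _, 0 :: p => dpth A p + 1
  | div _ B, 1 :: p => dpth B p
  | bang A, 0 :: p => dpth A p
  | _, _ => 0

/-- The path from (the root of the tree of) a type down to the unique leaf reachable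
without using arcs labelled `-1`. -/
def hext : Tp → List ℕ
  | pr _ => []
  | bang A => 0 :: hext A
  | div _ B => 1 :: hext B

/-- `H T a`: the unique leaf from which a path without `-1`-labelled arcs leads to `a`. -/
def H (T : Tp) (a : List ℕ) : List ℕ := a ++ hext (subAt T a)

/-- The strict linear order `<` on the vertices of the tree of a type:
for a primitive type it is trivial; for `!A` the new root is the minimum;
for `A \ B` it is the sum of the reversed order of `A`'s tree, the new root,
and the order of `B`'s tree. -/
def lt : Tp → List ℕ → List ℕ → Prop
  | bang A, 0 :: p, 0 :: q => lt A p q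
  | bang _, [], _ :: _ => True
  | div A _, 0 :: p, 0 :: q => lt A q p
  | div _ _, 0 :: _, [] => True
  | div _ _, 0 :: _, 1 :: _ => True
  | div _ _, [], 1 :: _ => True
  | div _ B, 1 :: p, 1 :: q => lt B p q
  | _, _, _ => False

/-- The reflexive closure `≤` of the order `<`. -/
def le (T : Tp) (a b : List ℕ) : Prop := lt T a b ∨ a = b

/-- `isLeaf T a`: the vertex `a` is a leaf of the tree of `T`. -/
def isLeaf (T : Tp) (a : List ℕ) : Prop := isVertex T a ∧ ∃ i, subAt T a = pr i

/-- The label (index of the primitive type) of a leaf (junk value off leaves). -/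
def labelNat (T : Tp) (a : List ℕ) : ℕ :=
  match subAt T a with
  | pr i => i
  | _ => 0

/-- `Orel T a b`: `b` is the parent of `a` (the arc from `a` points to `b`). -/
def Orel (T : Tp) (a b : List ℕ) : Prop := isVertex T a ∧ ∃ k, a = b ++ [k]

/-- The label in `{-1, 1, 2}` of the arc from the child `b ++ [k]` to its parent `b`
(junk value `0` if `b` is a leaf). -/
def arcLab (T : Tp) (b : List ℕ) (k : ℕ) : ℤ :=
  match subAt T b with
  | div _ _ => if k = 0 then -1 else 1
  | bang _ => 2
  | pr _ => 0

end Tp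

/-- The type whose proof structure is, by definition, the proof structure of the
sequent `A₁ … Aₙ → B`, namely `Aₙ \ (Aₙ₋₁ \ ⋯ \ (A₁ \ B) ⋯)`. -/
def seqType (Γ : List Tp) (B : Tp) : Tp := Γ.foldl (fun C A => Tp.div A C) B

/-- A proof net for the sequent whose proof structure is the tree of the type `T`:
a set `U` of vertices and a binary relation `S` on leaves satisfying PN1–PN11. -/
structure ProofNet (T : Tp) where
  U : List ℕ → Prop
  S : List ℕ → List ℕ → Prop
  U_sub : ∀ a, U a → T.isVertex a
  S_sub : ∀ a b, S a b → T.isLeaf a ∧ T.isLeaf b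
  /-- PN1: `S` is symmetric. -/
  pn1 : ∀ a b, S a b → S b a
  /-- PN2: `S` is functional. -/
  pn2 : ∀ a b c, S a b → S a c → b = c
  /-- PN3: `S` is planar. -/
  pn3 : ∀ a b c d, S a b → S c d → T.lt a c → T.lt c b → T.lt a d ∧ T.lt d b
  /-- PN4: `S`-linked leaves carry equal labels. -/
  pn4 : ∀ a b, S a b → T.labelNat a = T.labelNat b
  /-- PN5: if `(a,b) ∈ S` and `a < b` then `d(a) = d(b) + 1`. -/
  pn5 : ∀ a b, S a b → T.lt a b → T.dpth a = T.dpth b + 1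
  /-- PN6: if `a O* c`, `H(c) = b`, `a ∈ pr₁(S)` and `a < S(b) < b`, then there is a
  `d` with `S(a) O* d` and `H(d) = b`. -/
  pn6 : ∀ a c b a' b', T.isVertex a → c <+: a → T.H c = b → S a a' → S b b' →
      T.lt a b' → T.lt b' b → ∃ d, d <+: a' ∧ T.H d = b
  /-- PN7: `S` is nonempty. -/
  pn7 : ∃ a b, S a b
  /-- PN8: `pr₁(S) = W ∩ U`. -/
  pn8 : ∀ a, (∃ b, S a b) ↔ (T.isLeaf a ∧ U a)
  /-- PN9: if `a O b` and `b ∉ U` then `a ∉ U`. -/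
  pn9 : ∀ a b, T.Orel a b → ¬ U b → ¬ U a
  /-- PN10: if `a O b`, `a ∉ U` and `or(a,b) ≠ 2` then `b ∉ U`. -/
  pn10 : ∀ b k, T.isVertex (b ++ [k]) → ¬ U (b ++ [k]) → T.arcLab b k ≠ 2 → ¬ U b
  /-- PN11: if `a O b` and `d(b)` is even then `or(a,b) ≠ 2`. -/
  pn11 : ∀ b k, T.isVertex (b ++ [k]) → Even (T.dpth b) → T.arcLab b k ≠ 2

/-! Vertices strictly between two vertices of one child subtree lie in that subtree, and
there the order is the child's own order, possibly reversed; induction on the path `v` then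
shows that the vertices below `v` form an interval. -/

namespace Tp

theorem exists_eq_cons_of_lt_cons_of_lt_cons {T : Tp} {k : ℕ} {p q r : List ℕ}
    (hpq : T.lt (k :: p) q) (hqr : T.lt q (k :: r)) :
    ∃ q', q = k :: q' ∧
      ((T.subAt [k]).lt p q' ∧ (T.subAt [k]).lt q' r ∨
        (T.subAt [k]).lt r q' ∧ (T.subAt [k]).lt q' p) := by
  rcases T with _ | ⟨A, B⟩ | A <;> rcases k with _ | _ | k <;>
    rcases q with _ | ⟨_ | _ | j, q⟩ <;> simp_all [lt, subAt]

theorem isPrefix_of_lt_of_lt {v : List ℕ} {T : Tp} {a b c : List ℕ}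
    (hab : T.lt a b) (hbc : T.lt b c) (hva : v <+: a) (hvc : v <+: c) : v <+: b := by
  induction v generalizing T a b c with
  | nil => exact List.nil_prefix
  | cons k v ih =>
    obtain ⟨p, rfl⟩ := hva
    obtain ⟨r, rfl⟩ := hvc
    obtain ⟨q, rfl, ⟨hpq, hqr⟩ | ⟨hrq, hqp⟩⟩ := exists_eq_cons_of_lt_cons_of_lt_cons hab hbc
    · exact List.cons_prefix_cons.mpr ⟨rfl, ih hpq hqr (List.prefix_append _ _)
        (List.prefix_append _ _)⟩
    · exact List.cons_prefix_cons.mpr ⟨rfl, ih hrq hqp (List.prefix_append _ _)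
        (List.prefix_append _ _)⟩

end Tp

theorem stmt10_general (A : Tp) (a b c v : List ℕ)
    (hab : A.le a b) (hbc : A.le b c) (hav : v <+: a) (hcv : v <+: c) :
    v <+: b := by
  rcases hab with hab | rfl
  · rcases hbc with hbc | rfl
    · exact Tp.isPrefix_of_lt_of_lt hab hbc hav hcv
    · exact hcv
  · exact hav

/-- Property D1: if `a ≤ b ≤ c`, `a O* v` and `c O* v`, then `b O* v`
(`x O* y` meaning that `y` is a prefix of the path `x`). -/
theorem stmt10 (A : Tp) (a b c v : List ℕ)
    (ha : A.isVertex a) (hb : A.isVertex b) (hc : A.isVertex c) (hv : A.isVertex v)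
    (hab : A.le a b) (hbc : A.le b c) (hav : v <+: a) (hcv : v <+: c) :
    v <+: b :=
  stmt10_general A a b c v hab hbc hav hcv
end

section
/- Property D2 holds for the proof structure of any type of L*(\,!): if a O* b and d(b) is even, then a ≤ H(b) in the linear order. -/
/-! Below a vertex `b`, the order of the tree is the order of the subtree at `b`, reversed once
for each `-1`-labelled arc above `b`; and `hext` leads to the greatest vertex of a tree. So when
`d(b)` is even, `H(b) = b ++ hext` is the greatest vertex below `b`. -/

namespace Tp

theorem isVertex_append {A : Tp} {b p : List ℕ} (h : A.isVertex (b ++ p)) :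
    A.isVertex b ∧ (A.subAt b).isVertex p := by
  induction b generalizing A with
  | nil => exact ⟨by cases A <;> trivial, by rwa [subAt]⟩
  | cons k b ih =>
    match A, k, h with
    | bang _, 0, h => exact ih h
    | div _ _, 0, h => exact ih h
    | div _ _, 1, h => exact ih h
    | pr _, _, h | bang _, _ + 1, h | div _ _, _ + 2, h => simp [isVertex] at h

theorem lt_append_iff {A : Tp} {b : List ℕ} (hb : A.isVertex b) (p q : List ℕ) :
    A.lt (b ++ p) (b ++ q) ↔
      if Even (A.dpth b) then (A.subAt b).lt p q else (A.subAt b).lt q p := by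
  induction b generalizing A p q with
  | nil => simp [subAt, dpth]
  | cons k b ih =>
    match A, k, hb with
    | bang _, 0, hb => exact ih hb p q
    | div _ _, 1, hb => exact ih hb p q
    | pr _, _, hb | bang _, _ + 1, hb | div _ _, _ + 2, hb => simp [isVertex] at hb
    | div _ _, 0, hb =>
      rw [List.cons_append, List.cons_append, lt, ih hb q p]
      simp only [dpth, subAt, Nat.even_add_one]
      split_ifs <;> rfl

theorem le_append_iff_of_even {A : Tp} {b : List ℕ} (hb : A.isVertex b) (hev : Even (A.dpth b))
    (p q : List ℕ) : A.le (b ++ p) (b ++ q) ↔ (A.subAt b).le p q := by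
  simp only [le, lt_append_iff hb, if_pos hev, List.append_cancel_left_eq]

theorem le_hext {A : Tp} {p : List ℕ} (hp : A.isVertex p) : A.le p A.hext := by
  induction A generalizing p with
  | pr _ =>
    match p, hp with
    | [], _ => exact Or.inr rfl
    | _ :: _, hp => simp [isVertex] at hp
  | bang _ ih =>
    match p, hp with
    | [], _ => exact Or.inl trivial
    | 0 :: p, hp => exact (ih hp).imp id (congrArg _)
    | (_ + 1) :: _, hp => simp [isVertex] at hp
  | div _ _ _ ih =>
    match p, hp with
    | [], _ => exact Or.inl trivial
    | 0 :: _, _ => exact Or.inl trivial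
    | 1 :: p, hp => exact (ih hp).imp id (congrArg _)
    | (_ + 2) :: _, hp => simp [isVertex] at hp

end Tp

/-- Property D2: if `a O* b` and `d(b)` is even, then `a ≤ H(b)`. -/
theorem stmt11 (A : Tp) (a b : List ℕ) (ha : A.isVertex a)
    (hab : b <+: a) (hev : Even (A.dpth b)) :
    A.le a (A.H b) := by
  obtain ⟨p, rfl⟩ := hab
  obtain ⟨hb, hp⟩ := Tp.isVertex_append ha
  exact (Tp.le_append_iff_of_even hb hev p _).mpr (Tp.le_hext hp)
end

section
/- In the proof structure of any type of L*(\,!): (1) if a O* b, d(a) ≠ d(b), and d(b) is even, then a < H(b); (2) if a O* b, d(a) ≠ d(b), and d(b) is odd, then H(b) < a. -/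
lemma root_lt : ∀ (A : Tp) (a : List ℕ), A.isVertex a → A.dpth a ≠ 0 → A.lt a A.hext := by
  intro A
  induction A with
  | pr i =>
    intro a hv hd
    exfalso
    cases a with
    | nil => exact hd rfl
    | cons k p => simp [Tp.isVertex] at hv
  | bang A ih =>
    intro a hv hd
    cases a with
    | nil => exact absurd rfl hd
    | cons k p =>
      match k with
      | 0 => exact ih p hv hd
      | (n+1) => simp [Tp.isVertex] at hv
  | div A B ihA ihB =>
    intro a hv hd
    cases a with
    | nil => exact absurd rfl hd
    | cons k p =>
      match k with
      | 0 => trivial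
      | 1 => exact ihB p hv hd
      | (n+2) => simp [Tp.isVertex] at hv

/-- If `a O* b` and `d(a) ≠ d(b)`, then `a < H(b)` when `d(b)` is even,
and `H(b) < a` when `d(b)` is odd. -/
theorem stmt13 (A : Tp) (a b : List ℕ) (ha : A.isVertex a)
    (hab : b <+: a) (hne : A.dpth a ≠ A.dpth b) :
    (Even (A.dpth b) → A.lt a (A.H b)) ∧ (Odd (A.dpth b) → A.lt (A.H b) a) := by

  induction A generalizing a b with
  | pr i =>
    exfalso
    cases a with
    | nil => cases b with
      | nil => exact hne rfl
      | cons k q => cases hab.length_le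
    | cons k p => simp [Tp.isVertex] at ha
  | bang A ih =>
    cases b with
    | nil =>
      refine ⟨fun _ => root_lt _ a ha hne, fun hodd => ?_⟩
      simp [Tp.dpth] at hodd
    | cons k b' =>
      obtain ⟨t, rfl⟩ := hab
      match k with
      | 0 =>
        have := ih (b' ++ t) b' ha ⟨t, rfl⟩ hne
        simpa [Tp.H, Tp.lt, Tp.subAt, Tp.hext, Tp.dpth] using this
      | (n+1) =>
        rw [List.cons_append] at ha
        simp [Tp.isVertex] at ha
  | div A B ihA ihB =>
    cases b with
    | nil =>
      refine ⟨fun _ => root_lt _ a ha hne, fun hodd => ?_⟩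
      simp [Tp.dpth] at hodd
    | cons k b' =>
      obtain ⟨t, rfl⟩ := hab
      match k with
      | 0 =>
        have hne' : A.dpth (b' ++ t) ≠ A.dpth b' := by
          simp [Tp.dpth] at hne; exact hne
        have := ihA (b' ++ t) b' ha ⟨t, rfl⟩ hne'
        constructor
        · intro hev
          have : Odd (A.dpth b') := by
            simp [Tp.dpth, Nat.even_add_one, Nat.not_even_iff_odd] at hev
            exact hev
          simpa [Tp.H, Tp.lt, Tp.subAt, Tp.hext] using (ihA (b' ++ t) b' ha ⟨t, rfl⟩ hne').2 this
        · intro hodd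
          have : Even (A.dpth b') := by
            rcases hodd with ⟨m, hm⟩
            simp [Tp.dpth] at hm
            exact ⟨m, by omega⟩
          simpa [Tp.H, Tp.lt, Tp.subAt, Tp.hext] using (ihA (b' ++ t) b' ha ⟨t, rfl⟩ hne').1 this
      | 1 =>
        have := ihB (b' ++ t) b' ha ⟨t, rfl⟩ hne
        simpa [Tp.H, Tp.lt, Tp.subAt, Tp.hext, Tp.dpth] using this
      | (n+2) =>
        rw [List.cons_append] at ha
        simp [Tp.isVertex] at ha
end
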